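/- Let {f_i} be a d-decaying system with n ≤ Φ(n) ≤ βn, and Y_{Φ,ε} as above with a_n(x) ≤ l_{n+1} ≤ βγ·l_n for all n. Then there is a sequence v_n → 1 such that for every x ∈ Y_{Φ,ε}, (log r_{n+1}(x))/(log r_n(x)) < v_n, where r_n(x) = |C_n(x)|. -/

import Mathlib

/-! The cylinder `C_n(x)` is the image of `[0,1]` under `f_{a_1} ∘ ⋯ ∘ f_{a_n}`, so by the chain
rule and the mean value theorem its length `r_n` lies between `∏ ξ_{a_k}` and `∏ λ_{a_k}`. With
`ξ_i, λ_i ≈ i^{-d ± ε}` this gives `-log r_n = (d ± ε) ∑_{k ≤ n} log a_k + O(n)`. The digits are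
strictly increasing, so `∑_{k ≤ n} log a_k ≥ log n!` grows superlinearly, while they grow at most
geometrically, so `log a_{n+1} = O(n)`. Hence `log r_{n+1} / log r_n ≤ (d + 2ε) / (d - 2ε)` for
large `n`, uniformly in `x`. For fixed `n` only finitely many digit strings occur, so the ratio has
a finite supremum, and `v_n` is that supremum padded by `1 / (n + 1)`. -/

open Set Filter Topology MeasureTheory

/-- A `d`-decaying iterated function system on `[0,1]`: `C¹` maps `f_i` (for `i ≥ 1`)
with derivative `f' i`, satisfying uniform eventual contraction, disjointness of the
open images, and polynomial decay `ξ_i ≍ i^{-d}` of the derivative bounds. -/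
structure DDecaying (d : ℝ) where
  f : ℕ → ℝ → ℝ
  f' : ℕ → ℝ → ℝ
  ξ : ℕ → ℝ
  lam : ℕ → ℝ
  hd : 1 < d
  maps : ∀ i : ℕ, 1 ≤ i → MapsTo (f i) (Icc (0:ℝ) 1) (Icc (0:ℝ) 1)
  hderiv : ∀ i : ℕ, 1 ≤ i → ∀ x ∈ Icc (0:ℝ) 1, HasDerivAt (f i) (f' i x) x
  contract : ∃ m : ℕ, 1 ≤ m ∧ ∃ A : ℝ, 0 < A ∧ A < 1 ∧
    ∀ a : Fin m → ℕ, (∀ j, 1 ≤ a j) → ∀ x ∈ Icc (0:ℝ) 1,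
      0 < |deriv ((List.ofFn fun j => f (a j)).foldr (· ∘ ·) id) x| ∧
        |deriv ((List.ofFn fun j => f (a j)).foldr (· ∘ ·) id) x| ≤ A
  derivBounds : ∀ i : ℕ, 1 ≤ i → ∀ x ∈ Icc (0:ℝ) 1, ξ i ≤ |f' i x| ∧ |f' i x| ≤ lam i
  decay : ∀ ε : ℝ, 0 < ε → ∃ C₁ : ℝ, 0 < C₁ ∧ ∃ C₂ : ℝ, 0 < C₂ ∧ ∀ i : ℕ, 1 ≤ i →
    C₁ / (i : ℝ) ^ (d + ε) ≤ ξ i ∧ lam i ≤ C₂ / (i : ℝ) ^ (d - ε)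
  disj : ∀ i j, 1 ≤ i → 1 ≤ j → i ≠ j →
    Disjoint (f i '' Ioo (0:ℝ) 1) (f j '' Ioo (0:ℝ) 1)

variable {d : ℝ}

/-- The composition `f_{a 0} ∘ f_{a 1} ∘ ⋯ ∘ f_{a (n-1)}`. -/
def DDecaying.comp (S : DDecaying d) (a : ℕ → ℕ) (n : ℕ) : ℝ → ℝ :=
  ((List.range n).map fun k => S.f (a k)).foldr (· ∘ ·) id

/-- The approximating sequence `n ↦ f_{a 0} ∘ ⋯ ∘ f_{a (n-1)} (1)` for the projection `Π`. -/
def DDecaying.projSeq (S : DDecaying d) (a : ℕ → ℕ) (n : ℕ) : ℝ :=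
  S.comp a n 1

/-- The `n`-th level cylinder determined by the digits `a 0, …, a (n-1)`. -/
def DDecaying.cyl (S : DDecaying d) (a : ℕ → ℕ) (n : ℕ) : Set ℝ :=
  S.comp a n '' Icc (0:ℝ) 1

/-- The attractor of the subsystem `{f_i}_{i ≥ k}`. -/
def DDecaying.attractor (S : DDecaying d) (k : ℕ) : Set ℝ :=
  {x | ∃ a : ℕ → ℕ, (∀ n, k ≤ a n) ∧ Tendsto (S.projSeq a) atTop (𝓝 x)}

/-- The set `X_Φ = Π{a : a_{n+1} > Φ(a_n)}` of points all of whose digits grow at rate `Φ`. -/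
def DDecaying.XPhi (S : DDecaying d) (Φ : ℕ → ℝ) : Set ℝ :=
  {x | ∃ a : ℕ → ℕ, (∀ n, 1 ≤ a n) ∧ (∀ n, Φ (a n) < (a (n + 1) : ℝ)) ∧
    Tendsto (S.projSeq a) atTop (𝓝 x)}

open scoped Nat

theorem finite_image_of_dependsOn {ι β : Type*} {f : (ι → ℕ) → β} {s : Set ι} (hs : s.Finite)
    (hf : DependsOn f s) (b : ι → ℕ) : (f '' {a | ∀ i, a i ≤ b i}).Finite := by
  have : Finite s := hs.to_subtype
  have hrestrict : (s.domRestrict '' {a : ι → ℕ | ∀ i, a i ≤ b i}).Finite :=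
    (Set.Finite.pi (t := fun i : s => Iic (b i)) fun i => finite_Iic _).subset <| by
      rintro _ ⟨a, ha, rfl⟩ i -
      exact ha i
  have hfac := dependsOn_iff_factorsThrough.mp hf
  convert hrestrict.image (Function.extend s.domRestrict f fun _ => f 0) using 1
  rw [image_image]
  exact image_congr fun a _ => (hfac.extend_apply _ a).symm

theorem exists_tendsto_forall_lt_of_eventually_lt {ι : Type*} {F : ℕ → ι → ℝ} {A : Set ι}
    {c : ℝ} (hbdd : ∀ n, BddAbove (F n '' A))
    (hlim : ∀ δ > 0, ∀ᶠ n in atTop, ∀ i ∈ A, F n i < c + δ) :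
    ∃ v : ℕ → ℝ, Tendsto v atTop (𝓝 c) ∧ ∀ n, ∀ i ∈ A, F n i < v n := by
  set s : ℕ → ℝ := fun n => sSup (insert c (F n '' A))
  have hle : ∀ n, ∀ x ∈ insert c (F n '' A), x ≤ s n := fun n x hx =>
    le_csSup ((hbdd n).insert c) hx
  have hs : Tendsto s atTop (𝓝 c) := by
    refine tendsto_order.2 ⟨fun b hb => .of_forall fun n => hb.trans_le
      (hle n c (mem_insert c _)), fun b hb => ?_⟩
    filter_upwards [hlim ((b - c) / 2) (by linarith)] with n hn
    refine (csSup_le (insert_nonempty _ _) ?_).trans_lt (show c + (b - c) / 2 < b by linarith)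
    rintro _ (rfl | ⟨i, hi, rfl⟩)
    · linarith
    · exact (hn i hi).le
  refine ⟨fun n => s n + 1 / ((n : ℝ) + 1), by
    simpa using hs.add tendsto_one_div_add_atTop_nhds_zero_nat, fun n i hi => ?_⟩
  have := hle n (F n i) (mem_insert_of_mem c (mem_image_of_mem _ hi))
  have : (0 : ℝ) < 1 / ((n : ℝ) + 1) := by positivity
  linarith

theorem eventually_mul_le_log_factorial (M : ℝ) :
    ∀ᶠ n : ℕ in atTop, M * n ≤ Real.log n ! := by
  filter_upwards [(Real.tendsto_log_atTop.comp tendsto_natCast_atTop_atTop).eventually_ge_atTop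
    (M + 1), eventually_ge_atTop 1] with n hlog hn
  have hn' : (1 : ℝ) ≤ n := by exact_mod_cast hn
  have h2π : 0 ≤ Real.log (2 * Real.pi) := Real.log_nonneg (by linarith [Real.pi_gt_three])
  have := Stirling.le_log_factorial_stirling (n := n) (by omega)
  simp only [Function.comp_apply] at hlog
  nlinarith [Real.log_nonneg hn']

theorem log_factorial_le_sum_log {a : ℕ → ℕ} (ha : ∀ k, k + 1 ≤ a k) (n : ℕ) :
    Real.log n ! ≤ ∑ k ∈ Finset.range n, Real.log (a k) := by
  rw [← Finset.prod_range_add_one_eq_factorial, Nat.cast_prod,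
    Real.log_prod fun k _ => by positivity]
  exact Finset.sum_le_sum fun k _ => Real.log_le_log (by positivity) (by exact_mod_cast ha k)

theorem log_le_of_le_mul_pow {x B R : ℝ} {n : ℕ} (hx : 0 < x) (hR : 0 < R)
    (h : x ≤ B * R ^ n) : Real.log x ≤ |Real.log B| + n * |Real.log R| := by
  have hB : 0 < B := pos_of_mul_pos_left (hx.trans_le h) (by positivity)
  calc Real.log x ≤ Real.log (B * R ^ n) := Real.log_le_log hx h
    _ = Real.log B + n * Real.log R := by rw [Real.log_mul hB.ne' (by positivity), Real.log_pow]
    _ ≤ |Real.log B| + n * |Real.log R| := by gcongr <;> exact le_abs_self _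

namespace DDecaying

variable (S : DDecaying d)

theorem ξ_pos {i : ℕ} (hi : 1 ≤ i) : 0 < S.ξ i := by
  obtain ⟨C₁, hC₁, _, _, hdecay⟩ := S.decay 1 one_pos
  exact (div_pos hC₁ (Real.rpow_pos_of_pos (Nat.cast_pos.2 hi) _)).trans_le (hdecay i hi).1

theorem comp_succ (a : ℕ → ℕ) (n : ℕ) : S.comp a (n + 1) = S.comp a n ∘ S.f (a n) := by
  have foldr_comp : ∀ (L : List (ℝ → ℝ)) (g : ℝ → ℝ),
      L.foldr (· ∘ ·) g = L.foldr (· ∘ ·) id ∘ g := by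
    intro L g
    induction L with
    | nil => rfl
    | cons h t ih => simp only [List.foldr_cons, ih]; rfl
  simp only [comp, List.range_succ, List.map_append, List.foldr_append, List.map_cons,
    List.map_nil, List.foldr_cons, List.foldr_nil]
  exact foldr_comp _ _

theorem dependsOn_cyl (n : ℕ) : DependsOn (fun a => S.cyl a n) (Iio n) := by
  intro a b hab
  simp only [cyl, comp]
  rw [List.map_congr_left fun k hk => congrArg S.f (hab k (List.mem_range.mp hk))]

section

variable {S} {a : ℕ → ℕ} {n : ℕ}

theorem mapsTo_comp (ha : ∀ k < n, 1 ≤ a k) :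
    MapsTo (S.comp a n) (Icc 0 1) (Icc 0 1) := by
  induction n with
  | zero => simp [comp, MapsTo]
  | succ n ih =>
    rw [comp_succ]
    exact (ih fun k hk => ha k (by omega)).comp (S.maps _ (ha n n.lt_succ_self))

theorem exists_hasDerivAt_comp (ha : ∀ k < n, 1 ≤ a k) {x : ℝ} (hx : x ∈ Icc 0 1) :
    ∃ D, HasDerivAt (S.comp a n) D x ∧
      ∏ k ∈ Finset.range n, S.ξ (a k) ≤ |D| ∧ |D| ≤ ∏ k ∈ Finset.range n, S.lam (a k) := by
  induction n generalizing x with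
  | zero => exact ⟨1, by simpa [comp] using hasDerivAt_id x, by simp, by simp⟩
  | succ n ih =>
    have han : 1 ≤ a n := ha n n.lt_succ_self
    obtain ⟨D, hD, hDξ, hDlam⟩ := ih (fun k hk => ha k (by omega)) (S.maps _ han hx)
    obtain ⟨hξ, hlam⟩ := S.derivBounds _ han x hx
    refine ⟨D * S.f' (a n) x, ?_, ?_, ?_⟩
    · rw [comp_succ]
      exact hD.comp x (S.hderiv _ han x hx)
    · rw [abs_mul, Finset.prod_range_succ]
      exact mul_le_mul hDξ hξ (S.ξ_pos han).le (abs_nonneg D)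
    · rw [abs_mul, Finset.prod_range_succ]
      exact mul_le_mul hDlam hlam (abs_nonneg _) ((abs_nonneg D).trans hDlam)

theorem isBounded_cyl (ha : ∀ k < n, 1 ≤ a k) : Bornology.IsBounded (S.cyl a n) :=
  Metric.isBounded_Icc (0 : ℝ) 1 |>.subset (mapsTo_comp ha).image_subset

theorem diam_cyl_le_prod_lam (ha : ∀ k < n, 1 ≤ a k) :
    Metric.diam (S.cyl a n) ≤ ∏ k ∈ Finset.range n, S.lam (a k) := by
  have hderiv : ∀ x ∈ Icc (0 : ℝ) 1,
      HasDerivWithinAt (S.comp a n) (deriv (S.comp a n) x) (Icc 0 1) x ∧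
        ‖deriv (S.comp a n) x‖ ≤ ∏ k ∈ Finset.range n, S.lam (a k) := by
    intro x hx
    obtain ⟨D, hD, -, hDlam⟩ := exists_hasDerivAt_comp ha hx
    rw [hD.deriv]
    exact ⟨hD.hasDerivWithinAt, hDlam⟩
  have hlam : 0 ≤ ∏ k ∈ Finset.range n, S.lam (a k) :=
    (norm_nonneg _).trans (hderiv 0 (left_mem_Icc.2 zero_le_one)).2
  refine Metric.diam_le_of_forall_dist_le hlam ?_
  rintro _ ⟨x, hx, rfl⟩ _ ⟨y, hy, rfl⟩
  have hxy : ‖x - y‖ ≤ 1 := by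
    rw [Real.norm_eq_abs, abs_le]
    constructor <;> linarith [hx.1, hx.2, hy.1, hy.2]
  calc dist (S.comp a n x) (S.comp a n y)
      ≤ (∏ k ∈ Finset.range n, S.lam (a k)) * ‖x - y‖ :=
        (convex_Icc (0 : ℝ) 1).norm_image_sub_le_of_norm_hasDerivWithin_le
          (fun z hz => (hderiv z hz).1) (fun z hz => (hderiv z hz).2) hy hx
    _ ≤ ∏ k ∈ Finset.range n, S.lam (a k) := mul_le_of_le_one_right hlam hxy

theorem prod_ξ_le_diam_cyl (ha : ∀ k < n, 1 ≤ a k) :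
    ∏ k ∈ Finset.range n, S.ξ (a k) ≤ Metric.diam (S.cyl a n) := by
  have hderiv : ∀ x ∈ Icc (0 : ℝ) 1, HasDerivAt (S.comp a n) (deriv (S.comp a n) x) x := by
    intro x hx
    obtain ⟨D, hD, -⟩ := exists_hasDerivAt_comp ha hx
    rwa [hD.deriv]
  obtain ⟨c, hc, hslope⟩ := exists_hasDerivAt_eq_slope (S.comp a n) (deriv (S.comp a n))
    zero_lt_one (fun x hx => (hderiv x hx).continuousAt.continuousWithinAt)
    (fun x hx => hderiv x (Ioo_subset_Icc_self hx))
  obtain ⟨D, hD, hDξ, -⟩ := exists_hasDerivAt_comp ha (Ioo_subset_Icc_self hc)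
  rw [hD.deriv, sub_zero, div_one] at hslope
  calc ∏ k ∈ Finset.range n, S.ξ (a k) ≤ |D| := hDξ
    _ = dist (S.comp a n 1) (S.comp a n 0) := by rw [hslope, Real.dist_eq]
    _ ≤ Metric.diam (S.cyl a n) :=
        Metric.dist_le_diam_of_mem (isBounded_cyl ha) ⟨1, by simp, rfl⟩ ⟨0, by simp, rfl⟩

end

theorem exists_neg_log_diam_cyl_bounds {ε : ℝ} (hε : 0 < ε) :
    ∃ c ≥ 0, ∀ (a : ℕ → ℕ) (n : ℕ), (∀ k < n, 1 ≤ a k) →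
      (d - ε) * ∑ k ∈ Finset.range n, Real.log (a k) - c * n ≤
          -Real.log (Metric.diam (S.cyl a n)) ∧
        -Real.log (Metric.diam (S.cyl a n)) ≤
          (d + ε) * ∑ k ∈ Finset.range n, Real.log (a k) + c * n := by
  obtain ⟨C₁, hC₁, C₂, hC₂, hdecay⟩ := S.decay ε hε
  set c := |Real.log C₁| + |Real.log C₂|
  refine ⟨c, by positivity, fun a n ha => ?_⟩
  have ha' : ∀ k ∈ Finset.range n, 1 ≤ a k := fun k hk => ha k (Finset.mem_range.1 hk)
  have hξ : ∀ k ∈ Finset.range n, 0 < S.ξ (a k) := fun k hk => S.ξ_pos (ha' k hk)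
  have hlam : ∀ k ∈ Finset.range n, 0 < S.lam (a k) := fun k hk =>
    have hb := S.derivBounds _ (ha' k hk) 0 (left_mem_Icc.2 zero_le_one)
    (hξ k hk).trans_le (hb.1.trans hb.2)
  have hdigit : ∀ k ∈ Finset.range n,
      -(d + ε) * Real.log (a k) - c ≤ Real.log (S.ξ (a k)) ∧
        Real.log (S.lam (a k)) ≤ -(d - ε) * Real.log (a k) + c := by
    intro k hk
    have hak : (0 : ℝ) < a k := Nat.cast_pos.2 (ha' k hk)
    obtain ⟨hlow, hup⟩ := hdecay _ (ha' k hk)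
    have hlow := Real.log_le_log (by positivity) hlow
    have hup := Real.log_le_log (hlam k hk) hup
    rw [Real.log_div hC₁.ne' (by positivity), Real.log_rpow hak] at hlow
    rw [Real.log_div hC₂.ne' (by positivity), Real.log_rpow hak] at hup
    constructor <;>
      linarith [neg_abs_le (Real.log C₁), le_abs_self (Real.log C₂), abs_nonneg (Real.log C₁),
        abs_nonneg (Real.log C₂)]
  have hr : 0 < Metric.diam (S.cyl a n) :=
    (Finset.prod_pos hξ).trans_le (prod_ξ_le_diam_cyl ha)
  have hsum : ∀ e e' : ℝ, ∑ k ∈ Finset.range n, (e * Real.log (a k) + e') =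
      e * ∑ k ∈ Finset.range n, Real.log (a k) + e' * n := fun e e' => by
    rw [Finset.sum_add_distrib, ← Finset.mul_sum, Finset.sum_const, Finset.card_range,
      nsmul_eq_mul, mul_comm e']
  constructor
  · have hlog := Real.log_le_log hr (diam_cyl_le_prod_lam ha)
    rw [Real.log_prod fun k hk => (hlam k hk).ne'] at hlog
    have := (Finset.sum_le_sum fun k hk => (hdigit k hk).2).trans_eq (hsum _ c)
    linarith
  · have hlog := Real.log_le_log (Finset.prod_pos hξ) (prod_ξ_le_diam_cyl ha)
    rw [Real.log_prod fun k hk => (hξ k hk).ne'] at hlog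
    have := (hsum (-(d + ε)) (-c)).symm.trans_le
      (Finset.sum_le_sum (g := fun k => Real.log (S.ξ (a k))) fun k hk => by
        linarith [(hdigit k hk).1])
    linarith

theorem eventually_log_diam_cyl_ratio_lt {B R : ℝ} (hR : 0 < R) {δ : ℝ} (hδ : 0 < δ) :
    ∀ᶠ n in atTop, ∀ a : ℕ → ℕ, (∀ k, k + 1 ≤ a k) → (∀ k, (a k : ℝ) ≤ B * R ^ k) →
      Real.log (Metric.diam (S.cyl a (n + 1))) / Real.log (Metric.diam (S.cyl a n)) < 1 + δ := by
  have hd : 0 < d := one_pos.trans S.hd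
  set η := δ * d / (4 * (2 + δ))
  have hη : 0 < η := by positivity
  have hηd : d + 2 * η < (1 + δ) * (d - 2 * η) := by
    have : η * (4 * (2 + δ)) = δ * d := div_mul_cancel₀ _ (by positivity)
    nlinarith
  obtain ⟨c, hc, hbounds⟩ := S.exists_neg_log_diam_cyl_bounds hη
  set L := (d + η) * (|Real.log B| + |Real.log R|) + c
  have hL : 0 ≤ L := by positivity
  filter_upwards [eventually_mul_le_log_factorial (2 * L / η + 1), eventually_ge_atTop 1]
    with n hfact hn a hlow hgrowth
  have hn' : (1 : ℝ) ≤ n := by exact_mod_cast hn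
  have ha : ∀ k, 1 ≤ a k := fun k => (Nat.le_add_left 1 k).trans (hlow k)
  obtain ⟨hX, -⟩ := hbounds a n fun k _ => ha k
  obtain ⟨-, hY⟩ := hbounds a (n + 1) fun k _ => ha k
  rw [Finset.sum_range_succ] at hY
  push_cast at hY
  set Q := ∑ k ∈ Finset.range n, Real.log (a k)
  have hQ : Real.log n ! ≤ Q := log_factorial_le_sum_log hlow n
  have hq := log_le_of_le_mul_pow (Nat.cast_pos.2 (ha n)) hR (hgrowth n)
  -- all terms linear in `n` are negligible against `Q ≥ log n!`
  have hηQ : L * (n + 1) ≤ η * Q := by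
    have : (2 * L / η + 1) * n * η = 2 * L * n + η * n := by field_simp
    nlinarith
  have hQpos : 0 < Q := by
    have : 0 ≤ 2 * L / η := by positivity
    nlinarith
  have hlin : (d + η) * Real.log (a n) + c * (n + 1) ≤ L * (n + 1) := by
    have : (d + η) * Real.log (a n) ≤ (d + η) * ((|Real.log B| + |Real.log R|) * (n + 1)) :=
      mul_le_mul_of_nonneg_left (by nlinarith [abs_nonneg (Real.log B), abs_nonneg (Real.log R)])
        (by positivity)
    nlinarith
  have hcn : c * n ≤ L * (n + 1) := by
    have : c ≤ L := le_add_of_nonneg_left (by positivity)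
    nlinarith
  have hX' : (d - 2 * η) * Q ≤ -Real.log (Metric.diam (S.cyl a n)) := by nlinarith
  have hY' : -Real.log (Metric.diam (S.cyl a (n + 1))) ≤ (d + 2 * η) * Q := by nlinarith
  have hXpos : 0 < -Real.log (Metric.diam (S.cyl a n)) :=
    lt_of_lt_of_le (mul_pos (by nlinarith) hQpos) hX'
  rw [← neg_div_neg_eq, div_lt_iff₀ hXpos]
  nlinarith

end DDecaying

theorem add_one_le_of_interlaced {Φ : ℕ → ℝ} (hΦ : ∀ n : ℕ, 1 ≤ n → (n : ℝ) ≤ Φ n) {l : ℕ → ℕ}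
    (hl : ∀ n : ℕ, 1 ≤ n → 1 ≤ l n) {a : ℕ → ℕ}
    (ha : ∀ n : ℕ, Φ (l (n + 1)) < (a n : ℝ) ∧ a n ≤ l (n + 2)) (k : ℕ) : k + 1 ≤ a k := by
  have hΦl : ∀ n, (l (n + 1) : ℝ) < a n := fun n =>
    (hΦ _ (hl _ n.succ_pos)).trans_lt (ha n).1
  have hmono : StrictMono a := strictMono_nat_of_lt_succ fun n => by
    exact_mod_cast (Nat.cast_le.2 (ha n).2).trans_lt (hΦl (n + 1))
  have ha0 : 1 ≤ a 0 := by exact_mod_cast (Nat.one_le_cast.2 (hl 1 le_rfl)).trans (hΦl 0).le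
  simpa using (hmono.add_le_nat k 0).trans' (Nat.add_le_add_left ha0 k)

theorem cylinder_log_ratio_general (d : ℝ) (S : DDecaying d) (β γ : ℝ) (hβ : 1 ≤ β)
    (hγ : 1 ≤ γ) (Φ : ℕ → ℝ)
    (hΦ : ∀ n : ℕ, 1 ≤ n → (n : ℝ) ≤ Φ n ∧ Φ n ≤ β * n)
    (l : ℕ → ℕ) (hl : ∀ n : ℕ, 1 ≤ n → 1 ≤ l n ∧ (l (n + 1) : ℝ) ≤ β * γ * l n) :
    ∃ v : ℕ → ℝ, Tendsto v atTop (𝓝 1) ∧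
      ∀ a : ℕ → ℕ, (∀ n : ℕ, Φ (l (n + 1)) < (a n : ℝ) ∧ a n ≤ l (n + 2)) →
      ∀ n : ℕ, 1 ≤ n →
        Real.log (Metric.diam (S.cyl a (n + 1))) / Real.log (Metric.diam (S.cyl a n))
          < v n := by
  set A := {a : ℕ → ℕ | ∀ n : ℕ, Φ (l (n + 1)) < (a n : ℝ) ∧ a n ≤ l (n + 2)}
  set F : ℕ → (ℕ → ℕ) → ℝ := fun n a =>
    Real.log (Metric.diam (S.cyl a (n + 1))) / Real.log (Metric.diam (S.cyl a n))
  have hR : 0 < β * γ := by positivity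
  have hgrowth : ∀ a ∈ A, ∀ k, (a k : ℝ) ≤ l 1 * (β * γ) * (β * γ) ^ k := fun a ha k =>
    calc (a k : ℝ) ≤ l (k + 1 + 1) := by exact_mod_cast (ha k).2
      _ ≤ (β * γ) ^ (k + 1) * l (0 + 1) :=
        le_geom (u := fun k => (l (k + 1) : ℝ)) hR.le _ fun j _ => (hl (j + 1) j.succ_pos).2
      _ = l 1 * (β * γ) * (β * γ) ^ k := by ring
  have hdepends : ∀ n, DependsOn (F n) (Iio (n + 1)) := fun n x y h => by
    have h₀ : S.cyl x n = S.cyl y n := S.dependsOn_cyl n fun k hk => h k (Nat.lt_succ_of_lt hk)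
    have h₁ : S.cyl x (n + 1) = S.cyl y (n + 1) := S.dependsOn_cyl (n + 1) h
    simp only [F, h₀, h₁]
  obtain ⟨v, hv, hlt⟩ := exists_tendsto_forall_lt_of_eventually_lt (F := F) (A := A)
    (fun n => ((finite_image_of_dependsOn (finite_Iio _) (hdepends n) fun k => l (k + 2)).subset
      (image_mono fun a ha k => (ha k).2)).bddAbove)
    fun δ hδ => (S.eventually_log_diam_cyl_ratio_lt hR hδ).mono fun n hn a ha =>
      hn a (add_one_le_of_interlaced (fun n hn => (hΦ n hn).1) (fun n hn => (hl n hn).1) ha)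
        (hgrowth a ha)
  exact ⟨v, hv, fun a ha n _ => hlt n a ha⟩

/-- With digits of `Y_{Φ,ε}` bounded by `a_n(x) ≤ l_{n+1} ≤ βγ l_n`, there is a sequence
`v_n → 1` with `log r_{n+1}(x) / log r_n(x) < v_n` on `Y_{Φ,ε}`. -/
theorem cylinder_log_ratio (d : ℝ) (S : DDecaying d) (β γ ε : ℝ) (hβ : 1 ≤ β)
    (hγ : 1 ≤ γ) (hε : 0 < ε) (hεd : ε < 1 / d) (Φ : ℕ → ℝ)
    (hΦ : ∀ n : ℕ, 1 ≤ n → (n : ℝ) ≤ Φ n ∧ Φ n ≤ β * n)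
    (l : ℕ → ℕ) (hl : ∀ n : ℕ, 1 ≤ n → 1 ≤ l n ∧ (l (n + 1) : ℝ) ≤ β * γ * l n) :
    ∃ v : ℕ → ℝ, Tendsto v atTop (𝓝 1) ∧
      ∀ a : ℕ → ℕ, (∀ n : ℕ, Φ (l (n + 1)) < (a n : ℝ) ∧ a n ≤ l (n + 2)) →
      ∀ n : ℕ, 1 ≤ n →
        Real.log (Metric.diam (S.cyl a (n + 1))) / Real.log (Metric.diam (S.cyl a n))
          < v n :=
  cylinder_log_ratio_general d S β γ hβ hγ Φ hΦ l hl
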